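/- (Inverse-squared-gradient sum bound along AdaNGD_2 iterates, smooth case.) Let f : ℝ^d → ℝ be convex, differentiable and β-smooth, and suppose the global minimizer x* := argmin_{x ∈ ℝ^d} f(x) belongs to K. Let x_1, …, x_T be the AdaNGD_k iterates with k = 2, with g_t := ∇f(x_t) ≠ 0 for all t = 1, …, T. Then T ≤ 2√2 · β D · √(Σ_{t=1}^T 1/‖g_t‖²). -/

import Mathlib

/-!
Write `r_t = ‖x_t - x*‖²` and `a_t = ‖g_t‖⁻²`. Convexity and β-smoothness give
`‖g‖² ≤ 2β ⟪g, x - x*⟫`, and projecting onto `K ∋ x*` does not increase the distance to `x*`,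
so one AdaNGD₂ step yields `η_t / β ≤ r_t - r_{t+1} + η_t² a_t`. Dividing by `2 η_t` and summing,
the telescoping part is at most `D² / (2 η_T)` because `1 / η_t` increases, and the rest is
controlled by `∑ a_t / √(a_1 + ⋯ + a_t) ≤ 2 √(a_1 + ⋯ + a_T)`.
-/

open Finset InnerProductSpace

lemma div_sqrt_add_le_two_mul_sub_sqrt {s a : ℝ} (hs : 0 ≤ s) (ha : 0 ≤ a) :
    a / √(s + a) ≤ 2 * (√(s + a) - √s) := by
  rcases (add_nonneg hs ha).eq_or_lt with h | h
  · obtain rfl : s = 0 := by linarith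
    simp [← h]
  rw [div_le_iff₀ (Real.sqrt_pos.2 h)]
  nlinarith [Real.sq_sqrt hs, Real.sq_sqrt h.le, sq_nonneg (√(s + a) - √s)]

lemma sum_div_sqrt_partialSum_le {a : ℕ → ℝ} (ha : ∀ t, 0 ≤ a t) (n : ℕ) :
    ∑ t ∈ Icc 1 n, a t / √(∑ τ ∈ Icc 1 t, a τ) ≤ 2 * √(∑ t ∈ Icc 1 n, a t) := by
  induction n with
  | zero => simp
  | succ n ih =>
    rw [sum_Icc_succ_top (by omega), sum_Icc_succ_top (by omega)]
    linarith [div_sqrt_add_le_two_mul_sub_sqrt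
      (sum_nonneg fun t (_ : t ∈ Icc 1 n) => ha t) (ha (n + 1))]

lemma sum_sub_mul_le_of_monotone {r c : ℕ → ℝ} {M : ℝ} (hc : Monotone c) (hc₀ : 0 ≤ c 0)
    (n : ℕ) (hr : ∀ t ∈ Icc 1 (n + 1), 0 ≤ r t ∧ r t ≤ M) :
    ∑ t ∈ Icc 1 n, (r t - r (t + 1)) * c t ≤ M * c n := by
  suffices h : ∀ m ≤ n, ∑ t ∈ Icc 1 m, (r t - r (t + 1)) * c t + r (m + 1) * c m ≤ M * c m by
    nlinarith [h n le_rfl, (hr (n + 1) (by simp)).1, hc₀.trans (hc (Nat.zero_le n))]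
  intro m hm
  induction m with
  | zero => simpa using mul_le_mul_of_nonneg_right (hr 1 (by simp)).2 hc₀
  | succ m ih =>
    rw [sum_Icc_succ_top (by omega)]
    have hrM := (hr (m + 1) (mem_Icc.2 ⟨by omega, by omega⟩)).2
    nlinarith [ih (by omega), mul_nonneg (sub_nonneg.2 hrM) (sub_nonneg.2 (hc m.le_succ))]

theorem natCast_le_of_adaptive_step_bound {a r η : ℕ → ℝ} {β D : ℝ} {T : ℕ}
    (hβ : 0 < β) (hD : 0 < D) (ha : ∀ t, 0 ≤ a t) (ha₁ : 0 < a 1)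
    (hr : ∀ t ∈ Icc 1 (T + 1), 0 ≤ r t ∧ r t ≤ D ^ 2)
    (hη : ∀ t, η t = D / √(2 * ∑ τ ∈ Icc 1 t, a τ))
    (hstep : ∀ t ∈ Icc 1 T, η t / β ≤ r t - r (t + 1) + η t ^ 2 * a t) :
    (T : ℝ) ≤ 2 * √2 * β * D * √(∑ t ∈ Icc 1 T, a t) := by
  set S : ℕ → ℝ := fun t => ∑ τ ∈ Icc 1 t, a τ with hS
  replace hη : ∀ t, η t = D / √(2 * S t) := hη
  have hS_mono : Monotone S := fun s t hst =>
    sum_le_sum_of_subset_of_nonneg (Icc_subset_Icc_right hst) fun τ _ _ => ha τ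
  have hS_pos : ∀ t ∈ Icc 1 T, 0 < S t := fun t ht =>
    ha₁.trans_le (single_le_sum (fun τ _ => ha τ) (mem_Icc.2 ⟨le_rfl, (mem_Icc.1 ht).1⟩))
  have hinv : ∀ t, (2 * η t)⁻¹ = √(2 * S t) / (2 * D) := fun t => by
    rw [hη, mul_div_assoc', inv_div]
  have hterm : ∀ t ∈ Icc 1 T,
      1 / (2 * β) ≤ (r t - r (t + 1)) * (2 * η t)⁻¹ + D / (2 * √2) * (a t / √(S t)) := by
    intro t ht
    have hSt := hS_pos t ht
    have hηt : 0 < η t := by rw [hη]; positivity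
    calc 1 / (2 * β) = η t / β * (2 * η t)⁻¹ := by field_simp
      _ ≤ (r t - r (t + 1) + η t ^ 2 * a t) * (2 * η t)⁻¹ := by gcongr; exact hstep t ht
      _ = _ := by rw [hη t, Real.sqrt_mul zero_le_two]; field_simp
  have htel := sum_sub_mul_le_of_monotone (c := fun t => (2 * η t)⁻¹)
    (fun s t hst => by simp only [hinv]; gcongr; exact hS_mono hst) (by simp [hinv, hS]) T hr
  calc
    (T : ℝ) = 2 * β * ∑ t ∈ Icc 1 T, 1 / (2 * β) := by
      rw [sum_const, Nat.card_Icc, Nat.add_sub_cancel, nsmul_eq_mul]; field_simp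
    _ ≤ 2 * β * (∑ t ∈ Icc 1 T, (r t - r (t + 1)) * (2 * η t)⁻¹
          + D / (2 * √2) * ∑ t ∈ Icc 1 T, a t / √(S t)) := by
      gcongr
      rw [mul_sum, ← sum_add_distrib]
      exact sum_le_sum hterm
    _ ≤ 2 * β * (D ^ 2 * (√(2 * S T) / (2 * D)) + D / (2 * √2) * (2 * √(S T))) := by
      rw [← hinv]
      gcongr
      exact sum_div_sqrt_partialSum_le ha T
    _ = 2 * √2 * β * D * √(S T) := by
      rw [Real.sqrt_mul zero_le_two]; field_simp; rw [Real.sq_sqrt zero_le_two]; ring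

section InnerProductSpace

variable {E : Type*} [NormedAddCommGroup E] [InnerProductSpace ℝ E]

theorem Convex.norm_sub_le_of_forall_norm_sub_le {K : Set E} (hK : Convex ℝ K) {y p q : E}
    (hp : p ∈ K) (hq : q ∈ K) (hmin : ∀ z ∈ K, ‖p - y‖ ≤ ‖z - y‖) : ‖p - q‖ ≤ ‖y - q‖ := by
  have : Nonempty K := ⟨⟨p, hp⟩⟩
  have hinf : ‖y - p‖ = ⨅ w : K, ‖y - w‖ :=
    le_antisymm (le_ciInf fun w => by simpa only [norm_sub_rev y] using hmin w w.2)
      (ciInf_le ⟨0, Set.forall_mem_range.2 fun w : K => norm_nonneg (y - w)⟩ ⟨p, hp⟩)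
  have hvi := (norm_eq_iInf_iff_real_inner_le_zero hK hp).1 hinf q hq
  have hsplit : ‖y - q‖ ^ 2 = ‖y - p‖ ^ 2 - 2 * ⟪y - p, q - p⟫_ℝ + ‖p - q‖ ^ 2 := by
    rw [← sub_add_sub_cancel y p q, norm_add_sq_real, ← neg_sub q p, inner_neg_right]
    ring
  exact pow_le_pow_iff_left₀ (norm_nonneg _) (norm_nonneg _) two_ne_zero |>.1
    (by nlinarith [sq_nonneg ‖y - p‖])

variable {f : E → ℝ} {G : E → E} {β : ℝ} {xstar : E}

lemma apply_sub_smul_le_of_smooth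
    (hsmooth : ∀ x y, f y ≤ f x + ⟪G x, y - x⟫_ℝ + β / 2 * ‖x - y‖ ^ 2) (u : E) (ε : ℝ) :
    f (u - ε • G u) ≤ f u - ε * ‖G u‖ ^ 2 + β / 2 * ε ^ 2 * ‖G u‖ ^ 2 := by
  have h := hsmooth u (u - ε • G u)
  rwa [sub_sub_cancel_left, sub_sub_cancel, inner_neg_right, real_inner_smul_right,
    real_inner_self_eq_norm_sq, norm_smul, mul_pow, Real.norm_eq_abs, sq_abs, ← sub_eq_add_neg,
    ← mul_assoc] at h

lemma pos_of_smooth_of_ne_zero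
    (hsmooth : ∀ x y, f y ≤ f x + ⟪G x, y - x⟫_ℝ + β / 2 * ‖x - y‖ ^ 2)
    (hmin : ∀ y, f xstar ≤ f y) {u : E} (hu : G u ≠ 0) : 0 < β := by
  by_contra! hβ
  have hG : 0 < ‖G u‖ ^ 2 := by positivity
  have h := apply_sub_smul_le_of_smooth hsmooth u ((f u - f xstar + 1) / ‖G u‖ ^ 2)
  rw [div_mul_cancel₀ _ hG.ne'] at h
  nlinarith [hmin (u - ((f u - f xstar + 1) / ‖G u‖ ^ 2) • G u),
    mul_nonneg (neg_nonneg.2 hβ) (mul_nonneg (sq_nonneg ((f u - f xstar + 1) / ‖G u‖ ^ 2)) hG.le)]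

lemma sq_norm_le_of_smooth
    (hsmooth : ∀ x y, f y ≤ f x + ⟪G x, y - x⟫_ℝ + β / 2 * ‖x - y‖ ^ 2)
    (hmin : ∀ y, f xstar ≤ f y) (hβ : 0 < β) (u : E) :
    ‖G u‖ ^ 2 ≤ 2 * β * (f u - f xstar) := by
  have h := apply_sub_smul_le_of_smooth hsmooth u β⁻¹
  have hβ2 : β / 2 * β⁻¹ ^ 2 = β⁻¹ / 2 := by field_simp
  rw [hβ2] at h
  have key : β⁻¹ * ‖G u‖ ^ 2 ≤ 2 * (f u - f xstar) := by linarith [hmin (u - β⁻¹ • G u)]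
  calc ‖G u‖ ^ 2 = β * (β⁻¹ * ‖G u‖ ^ 2) := by field_simp
    _ ≤ β * (2 * (f u - f xstar)) := by gcongr
    _ = 2 * β * (f u - f xstar) := by ring

lemma sq_norm_le_inner_of_smooth_of_convex
    (hsmooth : ∀ x y, f y ≤ f x + ⟪G x, y - x⟫_ℝ + β / 2 * ‖x - y‖ ^ 2)
    (hconv : ∀ x y, f x + ⟪G x, y - x⟫_ℝ ≤ f y) (hmin : ∀ y, f xstar ≤ f y) (hβ : 0 < β)
    (u : E) : ‖G u‖ ^ 2 ≤ 2 * β * ⟪G u, u - xstar⟫_ℝ := by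
  have h := hconv u xstar
  rw [← neg_sub u xstar, inner_neg_right] at h
  calc ‖G u‖ ^ 2 ≤ 2 * β * (f u - f xstar) := sq_norm_le_of_smooth hsmooth hmin hβ u
    _ ≤ 2 * β * ⟪G u, u - xstar⟫_ℝ := by gcongr; linarith

lemma div_le_of_normalized_step {x g p : E} {η : ℝ} (hβ : 0 < β) (hη : 0 ≤ η) (hg : g ≠ 0)
    (hgx : ‖g‖ ^ 2 ≤ 2 * β * ⟪g, x - xstar⟫_ℝ)
    (hp : ‖p - xstar‖ ≤ ‖x - (η / ‖g‖ ^ 2) • g - xstar‖) :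
    η / β ≤ ‖x - xstar‖ ^ 2 - ‖p - xstar‖ ^ 2 + η ^ 2 * (‖g‖ ^ 2)⁻¹ := by
  have hG : 0 < ‖g‖ ^ 2 := by positivity
  have hexp : ‖x - (η / ‖g‖ ^ 2) • g - xstar‖ ^ 2
      = ‖x - xstar‖ ^ 2 - 2 * (η / ‖g‖ ^ 2) * ⟪g, x - xstar⟫_ℝ + η ^ 2 * (‖g‖ ^ 2)⁻¹ := by
    rw [sub_right_comm, norm_sub_sq_real, real_inner_smul_right, norm_smul, mul_pow,
      Real.norm_eq_abs, sq_abs, real_inner_comm]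
    field_simp
  have hdescent : η / β ≤ 2 * (η / ‖g‖ ^ 2) * ⟪g, x - xstar⟫_ℝ := by
    rw [div_le_iff₀ hβ]
    calc η = η / ‖g‖ ^ 2 * ‖g‖ ^ 2 := by field_simp
      _ ≤ η / ‖g‖ ^ 2 * (2 * β * ⟪g, x - xstar⟫_ℝ) := by gcongr
      _ = _ := by ring
  nlinarith [pow_le_pow_left₀ (norm_nonneg _) hp 2]

end InnerProductSpace

theorem adangd_two_inv_sq_sum_bound_general
    {d : ℕ} (T : ℕ) (β : ℝ)
    (K : Set (EuclideanSpace ℝ (Fin d)))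
    (hKbdd : Bornology.IsBounded K)
    (hKconv : Convex ℝ K)
    (proj : EuclideanSpace ℝ (Fin d) → EuclideanSpace ℝ (Fin d))
    (hproj_mem : ∀ y, proj y ∈ K)
    (hproj_min : ∀ y, ∀ z ∈ K, ‖proj y - y‖ ≤ ‖z - y‖)
    (D : ℝ) (hD : D = Metric.diam K)
    (f : EuclideanSpace ℝ (Fin d) → ℝ)
    (hconv : ∀ x y, f x + (inner ℝ (gradient f x) (y - x) : ℝ) ≤ f y)
    (hsmooth : ∀ x y, f y ≤ f x + (inner ℝ (gradient f x) (y - x) : ℝ) + (β / 2) * ‖x - y‖ ^ 2)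
    (xstar : EuclideanSpace ℝ (Fin d)) (hxstarK : xstar ∈ K)
    (hmin : ∀ y, f xstar ≤ f y)
    (x : ℕ → EuclideanSpace ℝ (Fin d)) (g : ℕ → EuclideanSpace ℝ (Fin d)) (η : ℕ → ℝ)
    (hx1 : x 1 ∈ K)
    (hg : ∀ t, g t = gradient f (x t))
    (hgne : ∀ t ∈ Finset.Icc 1 T, g t ≠ 0)
    (hη : ∀ t, η t = D / Real.sqrt (2 * ∑ τ ∈ Finset.Icc 1 t, (‖g τ‖ ^ 2)⁻¹))
    (hupd : ∀ t ∈ Finset.Icc 1 T, x (t + 1) = proj (x t - (η t / ‖g t‖ ^ 2) • g t))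
    :
    (T : ℝ) ≤ 2 * Real.sqrt 2 * β * D *
      Real.sqrt (∑ t ∈ Finset.Icc 1 T, (‖g t‖ ^ 2)⁻¹) := by
  rcases Nat.eq_zero_or_pos T with rfl | hT
  · simp
  have hg₁ : g 1 ≠ 0 := hgne 1 (mem_Icc.2 ⟨le_rfl, hT⟩)
  have hβ : 0 < β := pos_of_smooth_of_ne_zero hsmooth hmin (hg 1 ▸ hg₁)
  have hgrad (t : ℕ) : ‖g t‖ ^ 2 ≤ 2 * β * ⟪g t, x t - xstar⟫_ℝ :=
    hg t ▸ sq_norm_le_inner_of_smooth_of_convex hsmooth hconv hmin hβ (x t)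
  have hxK : ∀ t ∈ Icc 1 (T + 1), x t ∈ K := by
    rintro (_ | _ | t) ht
    · simp at ht
    · exact hx1
    · rw [hupd (t + 1) (mem_Icc.2 ⟨by omega, by have := (mem_Icc.1 ht).2; omega⟩)]
      exact hproj_mem _
  have hdist : ∀ t ∈ Icc 1 (T + 1), ‖x t - xstar‖ ≤ D := fun t ht => by
    rw [hD, ← dist_eq_norm]
    exact Metric.dist_le_diam_of_mem hKbdd (hxK t ht) hxstarK
  have hD_pos : 0 < D := by
    refine pos_of_mul_pos_right (a := 2 * β * ‖g 1‖) ?_ (by positivity)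
    calc 0 < ‖g 1‖ ^ 2 := by positivity
      _ ≤ 2 * β * ⟪g 1, x 1 - xstar⟫_ℝ := hgrad 1
      _ ≤ 2 * β * (‖g 1‖ * ‖x 1 - xstar‖) := by gcongr; exact real_inner_le_norm _ _
      _ ≤ 2 * β * ‖g 1‖ * D := by rw [← mul_assoc]; gcongr; exact hdist 1 (by simp)
  refine natCast_le_of_adaptive_step_bound (r := fun t => ‖x t - xstar‖ ^ 2) hβ hD_pos
    (fun t => by positivity) (by positivity)
    (fun t ht => ⟨by positivity, pow_le_pow_left₀ (norm_nonneg _) (hdist t ht) 2⟩) hη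
    fun t ht => ?_
  rw [hupd t ht]
  exact div_le_of_normalized_step hβ (by rw [hη]; positivity) (hgne t ht) (hgrad t)
    (hKconv.norm_sub_le_of_forall_norm_sub_le (hproj_mem _) hxstarK (hproj_min _))

theorem adangd_two_inv_sq_sum_bound
    {d : ℕ} (T : ℕ) (hT : 1 ≤ T) (β : ℝ)
    (K : Set (EuclideanSpace ℝ (Fin d)))
    (hKne : K.Nonempty) (hKcl : IsClosed K) (hKbdd : Bornology.IsBounded K)
    (hKconv : Convex ℝ K)
    (proj : EuclideanSpace ℝ (Fin d) → EuclideanSpace ℝ (Fin d))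
    (hproj_mem : ∀ y, proj y ∈ K)
    (hproj_min : ∀ y, ∀ z ∈ K, ‖proj y - y‖ ≤ ‖z - y‖)
    (D : ℝ) (hD : D = Metric.diam K)
    (f : EuclideanSpace ℝ (Fin d) → ℝ)
    (hdiff : Differentiable ℝ f)
    (hconv : ∀ x y, f x + (inner ℝ (gradient f x) (y - x) : ℝ) ≤ f y)
    (hsmooth : ∀ x y, f y ≤ f x + (inner ℝ (gradient f x) (y - x) : ℝ) + (β / 2) * ‖x - y‖ ^ 2)
    (xstar : EuclideanSpace ℝ (Fin d)) (hxstarK : xstar ∈ K)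
    (hmin : ∀ y, f xstar ≤ f y)
    (x : ℕ → EuclideanSpace ℝ (Fin d)) (g : ℕ → EuclideanSpace ℝ (Fin d)) (η : ℕ → ℝ)
    (hx1 : x 1 ∈ K)
    (hg : ∀ t, g t = gradient f (x t))
    (hgne : ∀ t ∈ Finset.Icc 1 T, g t ≠ 0)
    (hη : ∀ t, η t = D / Real.sqrt (2 * ∑ τ ∈ Finset.Icc 1 t, (‖g τ‖ ^ 2)⁻¹))
    (hupd : ∀ t ∈ Finset.Icc 1 T, x (t + 1) = proj (x t - (η t / ‖g t‖ ^ 2) • g t))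
    :
    (T : ℝ) ≤ 2 * Real.sqrt 2 * β * D *
      Real.sqrt (∑ t ∈ Finset.Icc 1 T, (‖g t‖ ^ 2)⁻¹) :=
  adangd_two_inv_sq_sum_bound_general T β K hKbdd hKconv proj hproj_mem hproj_min D hD f hconv
    hsmooth xstar hxstarK hmin x g η hx1 hg hgne hη hupd
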